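/- Multiset splitting for environments: if Γ and Δ are summable and ⊢^w e : Γ⊎Δ, then there are derivations ⊢^{w_Γ} e|_{dom(Γ)} : Γ and ⊢^{w_Δ} e|_{dom(Δ)} : Δ whose sizes sum to that of the original derivation and with w = max{w_Γ, w_Δ}. -/

import Mathlib

/-! ## Lambda terms, substitution, weak head reduction -/

inductive Tm : Type
  | var : ℕ → Tm
  | lam : ℕ → Tm → Tm
  | app : Tm → Tm → Tm
deriving DecidableEq

def subst (x : ℕ) (u : Tm) : Tm → Tm
  | .var y => if y = x then u else .var y
  | .lam y t => if y = x then .lam y t else .lam y (subst x u t)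
  | .app t s => .app (subst x u t) (subst x u s)

def fv : Tm → Finset ℕ
  | .var x => {x}
  | .lam x t => fv t \ {x}
  | .app t u => fv t ∪ fv u

/-- Weak head reduction: `(λx.t) u r₁ … r_h →wh t[x:=u] r₁ … r_h`. -/
inductive Wh : Tm → Tm → Prop
  | beta (x : ℕ) (t u : Tm) : Wh (.app (.lam x t) u) (subst x u t)
  | appL {t t' : Tm} (u : Tm) : Wh t t' → Wh (.app t u) (.app t' u)

/-! ## Space KAM -/

mutual
inductive Clo : Type
  | mk : Tm → Env → Clo
inductive Env : Type
  | nil : Env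
  | cons : ℕ → Clo → Env → Env
end

def Env.lookup : Env → ℕ → Option Clo
  | .nil, _ => none
  | .cons y c e, x => if x = y then some c else e.lookup x

def Env.dom : Env → Finset ℕ
  | .nil => ∅
  | .cons y _ e => insert y e.dom

/-- `e.restrict V` is the restriction `e|_V` of `e` to the variables in `V`. -/
def Env.restrict : Env → Finset ℕ → Env
  | .nil, _ => .nil
  | .cons y c e, V => if y ∈ V then .cons y c (e.restrict V) else e.restrict V

structure State : Type where
  tm : Tm
  env : Env
  stk : List Clo

/-- Space KAM transitions (with unchaining and eager garbage collection). -/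
inductive SpKAM : State → State → Prop
  | sea_v {t : Tm} {x : ℕ} {e : Env} {S : List Clo} {c : Clo} :
      e.lookup x = some c →
      SpKAM ⟨.app t (.var x), e, S⟩ ⟨t, e.restrict (fv t), c :: S⟩
  | sea_nv {t u : Tm} {e : Env} {S : List Clo} :
      (∀ y, u ≠ .var y) →
      SpKAM ⟨.app t u, e, S⟩ ⟨t, e.restrict (fv t), Clo.mk u (e.restrict (fv u)) :: S⟩
  | beta_w {x : ℕ} {t : Tm} {e : Env} {c : Clo} {S : List Clo} :
      x ∉ fv t →
      SpKAM ⟨.lam x t, e, c :: S⟩ ⟨t, e, S⟩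
  | beta_nw {x : ℕ} {t : Tm} {e : Env} {c : Clo} {S : List Clo} :
      x ∈ fv t →
      SpKAM ⟨.lam x t, e, c :: S⟩ ⟨t, .cons x c e, S⟩
  | sub {x : ℕ} {e e' : Env} {u : Tm} {S : List Clo} :
      e.lookup x = some (Clo.mk u e') →
      SpKAM ⟨.var x, e, S⟩ ⟨u, e', S⟩

/-- A state is reachable if it is the target of a run from an initial state
`(t₀, ε, ε)` with `t₀` closed. -/
def Reachable (s : State) : Prop :=
  ∃ t₀ : Tm, fv t₀ = ∅ ∧ Relation.ReflTransGen SpKAM ⟨t₀, .nil, []⟩ s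

mutual
def Clo.closures : Clo → List Clo
  | .mk t e => .mk t e :: e.closures
def Env.closures : Env → List Clo
  | .nil => []
  | .cons _ c e => c.closures ++ e.closures
end

/-- All closures occurring in a state (including the active closure). -/
def State.closures (s : State) : List Clo :=
  (Clo.mk s.tm s.env).closures ++ (s.stk.map Clo.closures).flatten

mutual
def Clo.size : Clo → ℕ
  | .mk _ e => 1 + e.size
def Env.size : Env → ℕ
  | .nil => 0
  | .cons _ c e => c.size + e.size
end

def State.size (s : State) : ℕ := s.env.size + (s.stk.map Clo.size).sum

def Clo.env : Clo → Env
  | .mk _ e => e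

/-- Final states: no transition applies. -/
def Final (s : State) : Prop := ∀ s', ¬ SpKAM s s'

/-- Runs together with their abstract space consumption (the maximum of the
sizes of the traversed states). -/
inductive RunSp : State → State → ℕ → Prop
  | refl (s : State) : RunSp s s s.size
  | step {s s' s'' : State} {m : ℕ} :
      SpKAM s s' → RunSp s' s'' m → RunSp s s'' (max s.size m)

/-! ## Closure types -/

mutual
inductive LTy : Type
  | star : LTy
  | arr : MTy → LTy → LTy
inductive MTy : Type
  | mk : List LTy → ℕ → MTy
end

def MTy.idx : MTy → ℕ | .mk _ k => k

def MTy.union : MTy → MTy → MTy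
  | .mk l k, .mk l' _ => .mk (l ++ l') k

def LTy.size : LTy → ℕ
  | .star => 0
  | .arr M A => M.idx + A.size

/-- Type contexts: finitely supported assignments of closure types to
variables (outside the domain the default `[]^1` is assigned). -/
structure Ctx : Type where
  dom : Finset ℕ
  ty : ℕ → MTy
  off_dom : ∀ x ∉ dom, ty x = MTy.mk [] 1

def Ctx.size (Γ : Ctx) : ℕ := Γ.dom.sum fun x => (Γ.ty x).idx

def Ctx.Dry (Γ : Ctx) : Prop :=
  ∀ x ∈ Γ.dom, ∃ k, 0 < k ∧ Γ.ty x = MTy.mk [] k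

def Ctx.Summable (Γ Δ : Ctx) : Prop :=
  ∀ x ∈ Γ.dom ∩ Δ.dom, (Γ.ty x).idx = (Δ.ty x).idx

def Ctx.empty : Ctx := ⟨∅, fun _ => MTy.mk [] 1, fun _ _ => rfl⟩

def Ctx.single (x : ℕ) (M : MTy) : Ctx :=
  ⟨{x}, fun y => if y = x then M else MTy.mk [] 1, by
    intro y hy
    simp only [Finset.mem_singleton] at hy
    simp [hy]⟩

def Ctx.extend (Γ : Ctx) (x : ℕ) (M : MTy) : Ctx :=
  ⟨insert x Γ.dom, Function.update Γ.ty x M, by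
    intro y hy
    simp only [Finset.mem_insert, not_or] at hy
    rw [Function.update_of_ne hy.1]
    exact Γ.off_dom y hy.2⟩

def Ctx.union (Γ Δ : Ctx) : Ctx :=
  ⟨Γ.dom ∪ Δ.dom,
   fun x =>
     if x ∈ Γ.dom then
       (if x ∈ Δ.dom then (Γ.ty x).union (Δ.ty x) else Γ.ty x)
     else Δ.ty x,
   by
    intro x hx
    simp only [Finset.mem_union, not_or] at hx
    simp [hx.1, hx.2, Δ.off_dom x hx.2]⟩

/-! ## The weighted closure type system (space weights), with derivation
sizes (counting all rules except T-many, T-none, T-cl, T-env). -/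

mutual
/-- `TJ Γ t A w n`: the judgment `Γ ⊢ t : A` is derivable with weight `w`
by a derivation of size `n`. -/
inductive TJ : Ctx → Tm → LTy → ℕ → ℕ → Prop
  | var {x : ℕ} {A : LTy} {k : ℕ} : 0 < k →
      TJ (Ctx.single x (.mk [A] k)) (.var x) A (k + A.size) 1
  | lamStar {Γ : Ctx} {x : ℕ} {t : Tm} :
      Γ.Dry → Γ.dom = fv (.lam x t) →
      TJ Γ (.lam x t) .star Γ.size 1
  | lam1 {Γ : Ctx} {x : ℕ} {M : MTy} {t : Tm} {A : LTy} {w n : ℕ} :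
      x ∉ Γ.dom →
      TJ (Γ.extend x M) t A w n →
      TJ Γ (.lam x t) (.arr M A) w (n + 1)
  | lam2 {Γ : Ctx} {x : ℕ} {t : Tm} {A : LTy} {k w n : ℕ} :
      x ∉ Γ.dom → 0 < k →
      TJ Γ t A w n →
      TJ Γ (.lam x t) (.arr (.mk [] k) A) (max w (Γ.size + A.size + k)) (n + 1)
  | app1 {Γ Δ : Ctx} {t u : Tm} {M : MTy} {A : LTy} {w v n m : ℕ} :
      Γ.Summable Δ →
      TJ Γ t (.arr M A) w n → MJ Δ u M v m →
      TJ (Γ.union Δ) (.app t u) A (max w v) (n + m + 1)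
  | app2 {Γ : Ctx} {x : ℕ} {t : Tm} {M : MTy} {A : LTy} {w n : ℕ} :
      Γ.Summable (Ctx.single x M) →
      TJ Γ t (.arr M A) w n →
      TJ (Γ.union (Ctx.single x M)) (.app t (.var x)) A w (n + 1)

/-- `MJ Γ t 𝒜 w n`: multiset judgment (rules T-none / T-many). -/
inductive MJ : Ctx → Tm → MTy → ℕ → ℕ → Prop
  | none {Γ : Ctx} {t : Tm} :
      Γ.Dry → Γ.dom = fv t →
      MJ Γ t (.mk [] (1 + Γ.size)) 0 0
  | one {Γ : Ctx} {t : Tm} {A : LTy} {w n : ℕ} :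
      TJ Γ t A w n →
      MJ Γ t (.mk [A] (1 + Γ.size)) w n
  | cons {Γ Δ : Ctx} {t : Tm} {A : LTy} {l : List LTy} {w v n m : ℕ} :
      Γ.Summable Δ →
      TJ Γ t A w n → MJ Δ t (.mk l (1 + Δ.size)) v m →
      MJ (Γ.union Δ) t (.mk (A :: l) (1 + (Γ.union Δ).size)) (max w v) (n + m)
end

/-! ## Typing of machine components -/

mutual
/-- `EJ e Γ w n`: rule T-env, typing an environment with a type context. -/
inductive EJ : Env → Ctx → ℕ → ℕ → Prop
  | nil : EJ .nil Ctx.empty 0 0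
  | cons {e : Env} {Γ : Ctx} {x : ℕ} {c : Clo} {M : MTy} {w v n m : ℕ} :
      x ∉ Γ.dom →
      CJ c M w n → EJ e Γ v m →
      EJ (.cons x c e) (Γ.extend x M) (max w v) (n + m)

/-- `CJ c 𝒜 w n`: rule T-cl, typing a closure with a closure type. -/
inductive CJ : Clo → MTy → ℕ → ℕ → Prop
  | mk {t : Tm} {e : Env} {Γ : Ctx} {M : MTy} {w v n m : ℕ} :
      EJ e Γ w n → MJ Γ t M v m →
      CJ (.mk t e) M (max w v) (n + m)
end

/-- Typing of stacks against the arrow structure of a linear type ending in `⋆`. -/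
inductive SJ : List Clo → LTy → ℕ → ℕ → Prop
  | nil : SJ [] .star 0 0
  | cons {c : Clo} {M : MTy} {S : List Clo} {A : LTy} {w v n m : ℕ} :
      CJ c M w n → SJ S A v m →
      SJ (c :: S) (.arr M A) (max w v) (n + m)

/-- `StJ s w n`: rule T-st, typing a state with `⋆`. -/
inductive StJ : State → ℕ → ℕ → Prop
  | mk {t : Tm} {e : Env} {S : List Clo} {Γ : Ctx} {A : LTy} {w u v n m p : ℕ} :
      TJ Γ t A w n → EJ e Γ u m → SJ S A v p →
      StJ ⟨t, e, S⟩ (max w (max u v)) (n + m + p)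


theorem Ctx.ext' {Γ Δ : Ctx} (hd : Γ.dom = Δ.dom) (ht : ∀ x, Γ.ty x = Δ.ty x) : Γ = Δ := by
  cases Γ; cases Δ; simp_all; exact funext ht

@[simp] theorem MTy.union_idx (M N : MTy) : (M.union N).idx = M.idx := by
  cases M; cases N; rfl

theorem MTy.union_assoc (M N P : MTy) : (M.union N).union P = M.union (N.union P) := by
  cases M; cases N; cases P; simp [MTy.union]

theorem MTy.eta (M : MTy) : M = .mk (match M with | .mk l _ => l) M.idx := by
  cases M; rfl

theorem Ctx.union_dom (Γ Δ : Ctx) : (Γ.union Δ).dom = Γ.dom ∪ Δ.dom := rfl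

theorem Ctx.union_assoc (Γ Δ E : Ctx) : (Γ.union Δ).union E = Γ.union (Δ.union E) := by
  apply Ctx.ext'
  · simp [Ctx.union_dom, Finset.union_assoc]
  · intro x
    by_cases h1 : x ∈ Γ.dom <;> by_cases h2 : x ∈ Δ.dom <;> by_cases h3 : x ∈ E.dom <;>
      simp [Ctx.union, h1, h2, h3, MTy.union_assoc]

theorem TJ_dom' : (∀ {Γ t A w n}, TJ Γ t A w n → Γ.dom = fv t) ∧
      (∀ {Γ t M w n}, MJ Γ t M w n → Γ.dom = fv t) := by
    constructor
    · intro Γ t A w n h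
      induction h using TJ.rec (motive_2 := fun Γ t M w n _ => Γ.dom = fv t) with
      | var => simp [Ctx.single, fv]
      | lamStar _ h => exact h
      | @lam1 Γ x M t A w n hx _ ih =>
          show Γ.dom = fv t \ {x}
          rw [← ih]
          show Γ.dom = insert x Γ.dom \ {x}
          rw [Finset.insert_sdiff_of_mem _ (Finset.mem_singleton_self x),
            Finset.sdiff_singleton_eq_erase, Finset.erase_eq_of_notMem hx]
      | @lam2 Γ x t A k w n hx hk _ ih =>
          simp [fv, ih]
          rw [Finset.sdiff_singleton_eq_erase, Finset.erase_eq_of_notMem (ih ▸ hx)]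
      | app1 _ _ _ ih1 ih2 => simp [fv, Ctx.union_dom, ih1, ih2]
      | @app2 Γ x t M A w n _ _ ih => simp [fv, Ctx.union_dom, ih, Ctx.single]
      | none h1 h2 => exact h2
      | one _ ih => exact ih
      | cons _ _ _ ih1 ih2 => simp [Ctx.union_dom, ih1, ih2]
    · intro Γ t M w n h
      induction h using MJ.rec (motive_1 := fun Γ t A w n _ => Γ.dom = fv t) with
      | var => simp [Ctx.single, fv]
      | lamStar _ h => exact h
      | @lam1 Γ x M t A w n hx _ ih =>
          show Γ.dom = fv t \ {x}
          rw [← ih]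
          show Γ.dom = insert x Γ.dom \ {x}
          rw [Finset.insert_sdiff_of_mem _ (Finset.mem_singleton_self x),
            Finset.sdiff_singleton_eq_erase, Finset.erase_eq_of_notMem hx]
      | @lam2 Γ x t A k w n hx hk _ ih =>
          simp [fv, ih]
          rw [Finset.sdiff_singleton_eq_erase, Finset.erase_eq_of_notMem (ih ▸ hx)]
      | app1 _ _ _ ih1 ih2 => simp [fv, Ctx.union_dom, ih1, ih2]
      | @app2 Γ x t M A w n _ _ ih => simp [fv, Ctx.union_dom, ih, Ctx.single]
      | none h1 h2 => exact h2
      | one _ ih => exact ih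
      | cons _ _ _ ih1 ih2 => simp [Ctx.union_dom, ih1, ih2]

theorem TJ_dom {Γ t A w n} (h : TJ Γ t A w n) : Γ.dom = fv t := TJ_dom'.1 h
theorem MJ_dom {Γ t M w n} (h : MJ Γ t M w n) : Γ.dom = fv t := TJ_dom'.2 h

theorem TJ_size_pos {Γ t A w n} (h : TJ Γ t A w n) : 0 < n := by
  cases h <;> omega

theorem MJ_idx {Γ t M w n} (h : MJ Γ t M w n) : M.idx = 1 + Γ.size := by
  cases h <;> rfl

theorem CJ_idx {c M w n} (h : CJ c M w n) : 0 < M.idx := by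
  cases h with
  | mk hE hM => rw [MJ_idx hM]; omega

theorem Ctx.size_congr {Γ Δ : Ctx} (hd : Γ.dom = Δ.dom)
    (hi : ∀ x, (Γ.ty x).idx = (Δ.ty x).idx) : Γ.size = Δ.size := by
  unfold Ctx.size; rw [hd]; exact Finset.sum_congr rfl fun x _ => hi x

theorem Env.spine_ind (P : Env → Prop) (h0 : P .nil)
    (h1 : ∀ x c e, P e → P (.cons x c e)) : ∀ e, P e :=
  fun e => Env.rec (motive_1 := fun _ => True) (fun _ _ _ => trivial) h0
    (fun x c e _ ih => h1 x c e ih) e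

@[simp] theorem Env.restrict_nil (V : Finset ℕ) : Env.nil.restrict V = .nil := rfl

theorem Env.restrict_congr : ∀ {e : Env} {V W : Finset ℕ},
    (∀ y ∈ e.dom, (y ∈ V ↔ y ∈ W)) → e.restrict V = e.restrict W := by
  have : ∀ e : Env, ∀ {V W : Finset ℕ},
      (∀ y ∈ e.dom, (y ∈ V ↔ y ∈ W)) → e.restrict V = e.restrict W := by
    refine Env.spine_ind _ ?_ ?_
    · intro V W _; rfl
    · intro y c e ih V W h
      have hy := h y (by simp [Env.dom])
      have ih' := ih fun z hz => h z (by simp [Env.dom, hz])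
      simp only [Env.restrict]
      by_cases hv : y ∈ V
      · rw [if_pos hv, if_pos (hy.mp hv), ih']
      · rw [if_neg hv, if_neg (fun hw => hv (hy.mpr hw)), ih']
  exact fun {e V W} h => this e h

theorem Env.restrict_of_subset : ∀ {e : Env} {V : Finset ℕ},
    e.dom ⊆ V → e.restrict V = e := by
  have : ∀ e : Env, ∀ {V : Finset ℕ}, e.dom ⊆ V → e.restrict V = e := by
    refine Env.spine_ind _ ?_ ?_
    · intro V _; rfl
    · intro y c e ih V h
      simp only [Env.restrict]
      rw [if_pos (h (by simp [Env.dom])), ih (fun z hz => h (by simp [Env.dom, hz]))]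
  exact fun {e V} h => this e h

theorem EJ_dom : ∀ {e Γ w n}, EJ e Γ w n → e.dom = Γ.dom := by
  have : ∀ e : Env, ∀ {Γ w n}, EJ e Γ w n → e.dom = Γ.dom := by
    refine Env.spine_ind _ ?_ ?_
    · intro Γ w n h; cases h; rfl
    · intro y c e ih Γ w n h
      cases h with
      | cons hx hc he => simp only [Env.dom, Ctx.extend]; rw [ih he]
  exact fun {e Γ w n} h => this e h

theorem EJ_pos : ∀ {e Γ w n}, EJ e Γ w n → ∀ x ∈ Γ.dom, 0 < (Γ.ty x).idx := by
  have : ∀ e : Env, ∀ {Γ w n}, EJ e Γ w n → ∀ x ∈ Γ.dom, 0 < (Γ.ty x).idx := by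
    refine Env.spine_ind _ ?_ ?_
    · intro Γ w n h; cases h; intro x hx; simp [Ctx.empty] at hx
    · intro y c e ih Γ w n h
      cases h with
      | @cons _ Γ0 _ _ M _ _ _ _ hx hc he =>
          intro z hz
          simp only [Ctx.extend] at hz ⊢
          by_cases hzy : z = y
          · subst hzy; rw [Function.update_self]; exact CJ_idx hc
          · rw [Function.update_of_ne hzy]
            exact ih he z (by simpa [hzy] using hz)
  exact fun {e Γ w n} h => this e h

/-- The dry version of a context: same domain, same indices, empty multisets. -/
def Ctx.dry (Γ : Ctx) : Ctx :=
  ⟨Γ.dom, fun x => .mk [] (Γ.ty x).idx, by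
    intro x hx
    show MTy.mk [] (Γ.ty x).idx = MTy.mk [] 1
    rw [Γ.off_dom x hx]; rfl⟩

theorem Ctx.dry_dom (Γ : Ctx) : Γ.dry.dom = Γ.dom := rfl

theorem Ctx.dry_Dry {Γ : Ctx} (h : ∀ x ∈ Γ.dom, 0 < (Γ.ty x).idx) : Γ.dry.Dry := by
  intro x hx; exact ⟨(Γ.ty x).idx, h x hx, rfl⟩

theorem Ctx.dry_size (Γ : Ctx) : Γ.dry.size = Γ.size := by
  apply Ctx.size_congr rfl; intro x; rfl

theorem Ctx.dry_union (Γ : Ctx) : Γ.dry.union Γ = Γ := by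
  apply Ctx.ext'
  · show Γ.dom ∪ Γ.dom = Γ.dom; simp
  · intro x
    show (if x ∈ Γ.dom then (if x ∈ Γ.dom then (MTy.mk [] (Γ.ty x).idx).union (Γ.ty x)
        else MTy.mk [] (Γ.ty x).idx) else Γ.ty x) = Γ.ty x
    by_cases hx : x ∈ Γ.dom
    · simp only [if_pos hx]
      cases hQ : Γ.ty x with
      | mk l k => simp [MTy.union, MTy.idx]
    · simp only [if_neg hx]

theorem Ctx.union_dry (Γ : Ctx) : Γ.union Γ.dry = Γ := by
  apply Ctx.ext'
  · show Γ.dom ∪ Γ.dom = Γ.dom; simp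
  · intro x
    show (if x ∈ Γ.dom then (if x ∈ Γ.dom then (Γ.ty x).union (MTy.mk [] (Γ.ty x).idx)
        else Γ.ty x) else MTy.mk [] (Γ.ty x).idx) = Γ.ty x
    by_cases hx : x ∈ Γ.dom
    · simp only [if_pos hx]
      cases hQ : Γ.ty x with
      | mk l k => simp [MTy.union, MTy.idx]
    · simp only [if_neg hx]; rw [Γ.off_dom x hx]; rfl

theorem Ctx.dry_summable_left (Γ : Ctx) : Γ.dry.Summable Γ := fun _ _ => rfl
theorem Ctx.dry_summable_right (Γ : Ctx) : Γ.Summable Γ.dry := fun _ _ => rfl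

theorem Ctx.union_idx (Γ Δ : Ctx) (x : ℕ) :
    ((Γ.union Δ).ty x).idx = if x ∈ Γ.dom then (Γ.ty x).idx else (Δ.ty x).idx := by
  show (if x ∈ Γ.dom then (if x ∈ Δ.dom then (Γ.ty x).union (Δ.ty x) else Γ.ty x)
      else Δ.ty x).idx = _
  by_cases h1 : x ∈ Γ.dom <;> by_cases h2 : x ∈ Δ.dom <;> simp [h1, h2]

theorem Ctx.union_ty_right {Γ Δ : Ctx} {x : ℕ} (h : x ∉ Γ.dom) :
    (Γ.union Δ).ty x = Δ.ty x := by
  show (if x ∈ Γ.dom then _ else Δ.ty x) = _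
  rw [if_neg h]

theorem mj_split : ∀ (n : ℕ) {Θ : Ctx} {t : Tm} {l1 l2 : List LTy} {k w : ℕ},
    (∀ x ∈ Θ.dom, 0 < (Θ.ty x).idx) →
    MJ Θ t (.mk (l1 ++ l2) k) w n →
    ∃ Θ1 Θ2 w1 w2 n1 n2, Θ = Θ1.union Θ2 ∧ Θ1.Summable Θ2 ∧
      MJ Θ1 t (.mk l1 (1 + Θ1.size)) w1 n1 ∧ MJ Θ2 t (.mk l2 (1 + Θ2.size)) w2 n2 ∧
      n = n1 + n2 ∧ w = max w1 w2 := by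
  intro n
  induction n using Nat.strong_induction_on with
  | _ n IH =>
    intro Θ t l1 l2 k w hpos h
    have hk : k = 1 + Θ.size := MJ_idx h
    subst hk
    match l1 with
    | [] =>
      refine ⟨Θ.dry, Θ, 0, w, 0, n, (Ctx.dry_union Θ).symm, Ctx.dry_summable_left Θ,
        ?_, ?_, (Nat.zero_add n).symm, (Nat.max_eq_right (Nat.zero_le w)).symm⟩
      · exact MJ.none (Ctx.dry_Dry hpos) ((Ctx.dry_dom Θ).trans (MJ_dom h))
      · simpa using h
    | A :: l1' =>
      generalize hM : MTy.mk ((A :: l1') ++ l2) (1 + Θ.size) = M0 at h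
      cases h with
      | none hD hd =>
          exfalso
          have := congrArg (fun M => match M with | MTy.mk l _ => l) hM
          simp at this
      | @one _ _ A' w' n' hT =>
          have h1 : (A :: l1') ++ l2 = [A'] := by
            have := congrArg (fun M => match M with | MTy.mk l _ => l) hM
            simpa using this
          simp only [List.cons_append, List.cons.injEq] at h1
          obtain ⟨rfl, h2⟩ := h1
          obtain ⟨h3, h4⟩ := List.append_eq_nil_iff.mp h2
          subst h3; subst h4
          refine ⟨Θ, Θ.dry, w, 0, n, 0, (Ctx.union_dry Θ).symm, Ctx.dry_summable_right Θ,
            MJ.one hT, ?_, rfl, (Nat.max_eq_left (Nat.zero_le w)).symm⟩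
          exact MJ.none (Ctx.dry_Dry hpos) ((Ctx.dry_dom Θ).trans (TJ_dom hT))
      | @cons Γ' Δ' _ A0 l wT vM nT mM hs hT hMJ =>
          have h1 : A :: (l1' ++ l2) = A0 :: l := by
            have := congrArg (fun M => match M with | MTy.mk l _ => l) hM
            simpa using this
          obtain ⟨rfl, rfl⟩ : A = A0 ∧ l1' ++ l2 = l := by
            simpa using h1
          -- domains
          have hdΓ : Γ'.dom = fv t := TJ_dom hT
          have hdΔ : Δ'.dom = fv t := MJ_dom hMJ
          -- positivity for Δ'
          have hposΔ : ∀ x ∈ Δ'.dom, 0 < (Δ'.ty x).idx := by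
            intro x hx
            have hxΓ : x ∈ Γ'.dom := by rw [hdΓ, ← hdΔ]; exact hx
            have := hpos x (by simp [Ctx.union_dom]; exact Or.inl hxΓ)
            rw [Ctx.union_idx, if_pos hxΓ] at this
            rwa [← hs x (Finset.mem_inter.mpr ⟨hxΓ, hx⟩)]
          have hnT := TJ_size_pos hT
          obtain ⟨Δ1, Δ2, w1, w2, m1, m2, hUe, hS12, hMJ1, hMJ2, hne, hwe⟩ :=
            IH mM (by omega) hposΔ hMJ
          have hdΔ1 : Δ1.dom = fv t := MJ_dom hMJ1
          have hdΔ2 : Δ2.dom = fv t := MJ_dom hMJ2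
          -- idx relations
          have hiΔ1 : ∀ x, (Δ'.ty x).idx = (Δ1.ty x).idx := by
            intro x
            by_cases hx : x ∈ Δ'.dom
            · rw [hUe, Ctx.union_idx, if_pos (by rw [hdΔ1, ← hdΔ]; exact hx)]
            · rw [Δ'.off_dom x hx, Δ1.off_dom x (by rw [hdΔ1, ← hdΔ]; exact hx)]
          have hiΔ2 : ∀ x, (Δ'.ty x).idx = (Δ2.ty x).idx := by
            intro x
            by_cases hx : x ∈ Δ'.dom
            · rw [hiΔ1 x]
              exact hS12 x (Finset.mem_inter.mpr ⟨by rw [hdΔ1, ← hdΔ]; exact hx,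
                by rw [hdΔ2, ← hdΔ]; exact hx⟩)
            · rw [Δ'.off_dom x hx, Δ2.off_dom x (by rw [hdΔ2, ← hdΔ]; exact hx)]
          have hs1 : Γ'.Summable Δ1 := by
            intro x hx
            rw [Finset.mem_inter] at hx
            rw [← hiΔ1 x]
            exact hs x (Finset.mem_inter.mpr ⟨hx.1, by rw [hdΔ, ← hdΔ1]; exact hx.2⟩)
          refine ⟨Γ'.union Δ1, Δ2, max wT w1, w2, nT + m1, m2, ?_, ?_,
            MJ.cons hs1 hT hMJ1, hMJ2, by omega, by omega⟩
          · rw [hUe, ← Ctx.union_assoc]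
          · intro x hx
            rw [Finset.mem_inter, Ctx.union_dom, Finset.mem_union] at hx
            have hxΓ : x ∈ Γ'.dom := by
              rcases hx.1 with h | h
              · exact h
              · rw [hdΓ, ← hdΔ1]; exact h
            rw [Ctx.union_idx, if_pos hxΓ, ← hiΔ2 x]
            exact hs x (Finset.mem_inter.mpr ⟨hxΓ, by
              rw [hdΔ, ← hdΔ2]; exact hx.2⟩)

theorem Clo.size_pos (c : Clo) : 0 < c.size := by
  cases c; simp [Clo.size]

theorem Ctx.union_ty_both {Γ Δ : Ctx} {x : ℕ} (h1 : x ∈ Γ.dom) (h2 : x ∈ Δ.dom) :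
    (Γ.union Δ).ty x = (Γ.ty x).union (Δ.ty x) := by
  show (if x ∈ Γ.dom then _ else _) = _
  rw [if_pos h1, if_pos h2]

theorem Ctx.union_ty_left {Γ Δ : Ctx} {x : ℕ} (h1 : x ∈ Γ.dom) (h2 : x ∉ Δ.dom) :
    (Γ.union Δ).ty x = Γ.ty x := by
  show (if x ∈ Γ.dom then _ else _) = _
  rw [if_pos h1, if_neg h2]

def Ctx.erase (Γ : Ctx) (x : ℕ) : Ctx :=
  ⟨Γ.dom.erase x, Function.update Γ.ty x (.mk [] 1), by
    intro y hy
    by_cases h : y = x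
    · subst h; rw [Function.update_self]
    · rw [Function.update_of_ne h]
      exact Γ.off_dom y fun hm => hy (Finset.mem_erase.mpr ⟨h, hm⟩)⟩

theorem Ctx.erase_dom (Γ : Ctx) (x : ℕ) : (Γ.erase x).dom = Γ.dom.erase x := rfl

theorem Ctx.not_mem_erase_dom (Γ : Ctx) (x : ℕ) : x ∉ (Γ.erase x).dom :=
  Finset.notMem_erase x Γ.dom

theorem Ctx.erase_ty_ne (Γ : Ctx) {x y : ℕ} (h : y ≠ x) : (Γ.erase x).ty y = Γ.ty y :=
  Function.update_of_ne h _ _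

theorem Ctx.erase_ty_self (Γ : Ctx) (x : ℕ) : (Γ.erase x).ty x = .mk [] 1 :=
  Function.update_self _ _ _

theorem Ctx.erase_of_not_mem {Γ : Ctx} {x : ℕ} (h : x ∉ Γ.dom) : Γ.erase x = Γ := by
  apply Ctx.ext'
  · rw [Ctx.erase_dom, Finset.erase_eq_of_notMem h]
  · intro y
    by_cases hy : y = x
    · subst hy; rw [Ctx.erase_ty_self, Γ.off_dom y h]
    · exact Ctx.erase_ty_ne Γ hy

theorem Ctx.erase_extend {Γ : Ctx} {x : ℕ} (h : x ∈ Γ.dom) :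
    (Γ.erase x).extend x (Γ.ty x) = Γ := by
  apply Ctx.ext'
  · show insert x (Γ.dom.erase x) = Γ.dom
    rw [Finset.insert_erase h]
  · intro y
    show Function.update (Function.update Γ.ty x (.mk [] 1)) x (Γ.ty x) y = Γ.ty y
    rw [Function.update_idem, Function.update_eq_self]

theorem Ctx.erase_union_erase_ty (Γ Δ : Ctx) {x y : ℕ} (h : y ≠ x) :
    ((Γ.erase x).union (Δ.erase x)).ty y = (Γ.union Δ).ty y := by
  show (if y ∈ (Γ.erase x).dom then
      (if y ∈ (Δ.erase x).dom then ((Γ.erase x).ty y).union ((Δ.erase x).ty y)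
        else (Γ.erase x).ty y) else (Δ.erase x).ty y) =
    (if y ∈ Γ.dom then (if y ∈ Δ.dom then (Γ.ty y).union (Δ.ty y) else Γ.ty y) else Δ.ty y)
  by_cases h1 : y ∈ Γ.dom <;> by_cases h2 : y ∈ Δ.dom <;>
    simp [h1, h2, Ctx.erase_dom, Finset.mem_erase, h,
      Ctx.erase_ty_ne Γ h, Ctx.erase_ty_ne Δ h]

mutual
theorem split_clo (c : Clo) (M1 M2 : MTy) (w n : ℕ)
    (hi : M1.idx = M2.idx) (h : CJ c (M1.union M2) w n) :
    ∃ w1 w2 n1 n2, CJ c M1 w1 n1 ∧ CJ c M2 w2 n2 ∧ n = n1 + n2 ∧ w = max w1 w2 := by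
  cases c with
  | mk t e =>
    cases M1 with
    | mk l1 k1 =>
      cases M2 with
      | mk l2 k2 =>
        have hi' : k1 = k2 := hi
        cases h with
        | @mk _ _ Θ _ wE vM nE mM hE hM =>
          have hpos := EJ_pos hE
          have hk1 : k1 = 1 + Θ.size := MJ_idx hM
          have hedom : e.dom = Θ.dom := EJ_dom hE
          obtain ⟨Θ1, Θ2, w1, w2, m1, m2, hU, hS, hM1, hM2, hn, hw⟩ :=
            mj_split mM hpos hM
          have hd : Θ.dom = fv t := MJ_dom hM
          have hd1 : Θ1.dom = fv t := MJ_dom hM1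
          have hd2 : Θ2.dom = fv t := MJ_dom hM2
          have hi1 : ∀ y, (Θ1.ty y).idx = (Θ.ty y).idx := by
            intro y
            by_cases hy : y ∈ Θ.dom
            · rw [hU, Ctx.union_idx, if_pos (by rw [hd1, ← hd]; exact hy)]
            · rw [Θ.off_dom y hy, Θ1.off_dom y (by rw [hd1, ← hd]; exact hy)]
          have hi2 : ∀ y, (Θ2.ty y).idx = (Θ.ty y).idx := by
            intro y
            by_cases hy : y ∈ Θ.dom
            · rw [← hS y (Finset.mem_inter.mpr ⟨by rw [hd1, ← hd]; exact hy,
                by rw [hd2, ← hd]; exact hy⟩)]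
              exact hi1 y
            · rw [Θ.off_dom y hy, Θ2.off_dom y (by rw [hd2, ← hd]; exact hy)]
          have hsz1 : Θ1.size = Θ.size := Ctx.size_congr (hd1.trans hd.symm) hi1
          have hsz2 : Θ2.size = Θ.size := Ctx.size_congr (hd2.trans hd.symm) hi2
          rw [hU] at hE
          obtain ⟨a1, a2, b1, b2, hE1, hE2, hbn, hbw⟩ :=
            split_env Θ1 Θ2 e wE nE hS hE
          rw [Env.restrict_of_subset (by rw [hedom, hd, ← hd1])] at hE1
          rw [Env.restrict_of_subset (by rw [hedom, hd, ← hd2])] at hE2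
          have hC1 : CJ (.mk t e) (.mk l1 k1) (max a1 w1) (b1 + m1) := by
            have := CJ.mk hE1 hM1
            rwa [show 1 + Θ1.size = k1 by omega] at this
          have hC2 : CJ (.mk t e) (.mk l2 k2) (max a2 w2) (b2 + m2) := by
            have := CJ.mk hE2 hM2
            rwa [show 1 + Θ2.size = k2 by omega] at this
          exact ⟨max a1 w1, max a2 w2, b1 + m1, b2 + m2, hC1, hC2, by omega, by omega⟩
termination_by 2 * c.size
decreasing_by
  have hc : c = Clo.mk t e := by assumption
  subst hc
  simp [Clo.size]
  omega

theorem split_env (Γ Δ : Ctx) (e : Env) (w n : ℕ)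
    (hsum : Γ.Summable Δ) (h : EJ e (Γ.union Δ) w n) :
    ∃ wΓ wΔ nΓ nΔ, EJ (e.restrict Γ.dom) Γ wΓ nΓ ∧ EJ (e.restrict Δ.dom) Δ wΔ nΔ ∧
      n = nΓ + nΔ ∧ w = max wΓ wΔ := by
  generalize hΘ : Γ.union Δ = Θ at h
  cases e with
  | nil =>
    cases h
    have hdoms : Γ.dom ∪ Δ.dom = ∅ := congrArg Ctx.dom hΘ
    obtain ⟨hdΓ, hdΔ⟩ := Finset.union_eq_empty.mp hdoms
    have hΓ : Γ = Ctx.empty :=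
      Ctx.ext' hdΓ fun y => Γ.off_dom y (by simp [hdΓ])
    have hΔ : Δ = Ctx.empty :=
      Ctx.ext' hdΔ fun y => Δ.off_dom y (by simp [hdΔ])
    refine ⟨0, 0, 0, 0, ?_, ?_, rfl, rfl⟩
    · rw [Env.restrict_nil, hΓ]; exact EJ.nil
    · rw [Env.restrict_nil, hΔ]; exact EJ.nil
  | cons x c e' =>
    cases h with
    | @cons _ Γ0 _ _ M w1 w2 n1 n2 hx hc he =>
      have hdomU : Γ.dom ∪ Δ.dom = insert x Γ0.dom := congrArg Ctx.dom hΘ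
      have htyU : ∀ y, (Γ.union Δ).ty y = Function.update Γ0.ty x M y :=
        fun y => congrArg (fun C => C.ty y) hΘ
      have hM : (Γ.union Δ).ty x = M := by rw [htyU x, Function.update_self]
      have htyne : ∀ y, y ≠ x → (Γ.union Δ).ty y = Γ0.ty y :=
        fun y hy => by rw [htyU y, Function.update_of_ne hy]
      have hxdom : x ∈ Γ.dom ∪ Δ.dom := by
        rw [hdomU]; exact Finset.mem_insert_self x _
      have hG0dom : Γ0.dom = (Γ.dom ∪ Δ.dom).erase x := by
        rw [hdomU, Finset.erase_insert hx]
      have hL1 : Γ0 = (Γ.erase x).union (Δ.erase x) := by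
        apply Ctx.ext'
        · rw [Ctx.union_dom, Ctx.erase_dom, Ctx.erase_dom,
            ← Finset.erase_union_distrib, ← hG0dom]
        · intro y
          by_cases hy : y = x
          · subst hy
            rw [Γ0.off_dom y hx, Ctx.union_ty_right (Ctx.not_mem_erase_dom Γ y),
              Ctx.erase_ty_self]
          · rw [Ctx.erase_union_erase_ty Γ Δ hy, htyne y hy]
      have hxe' : x ∉ e'.dom := by rw [EJ_dom he]; exact hx
      have hsum' : (Γ.erase x).Summable (Δ.erase x) := by
        intro y hy
        rw [Finset.mem_inter, Ctx.erase_dom, Ctx.erase_dom, Finset.mem_erase,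
          Finset.mem_erase] at hy
        rw [Ctx.erase_ty_ne Γ hy.1.1, Ctx.erase_ty_ne Δ hy.1.1]
        exact hsum y (Finset.mem_inter.mpr ⟨hy.1.2, hy.2.2⟩)
      rw [hL1] at he
      obtain ⟨a1, a2, b1, b2, hE1, hE2, hbn, hbw⟩ :=
        split_env (Γ.erase x) (Δ.erase x) e' w2 n2 hsum' he
      have hres : ∀ Ξ : Ctx, e'.restrict ((Ξ.erase x).dom) = e'.restrict Ξ.dom := by
        intro Ξ
        apply Env.restrict_congr
        intro y hy
        have hyx : y ≠ x := fun hh => hxe' (hh ▸ hy)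
        simp [Ctx.erase_dom, Finset.mem_erase, hyx]
      rw [hres] at hE1
      rw [hres] at hE2
      by_cases hxΓ : x ∈ Γ.dom <;> by_cases hxΔ : x ∈ Δ.dom
      · -- x in both domains: split the closure typing
        have hMeq : M = (Γ.ty x).union (Δ.ty x) := by
          rw [← hM, Ctx.union_ty_both hxΓ hxΔ]
        rw [hMeq] at hc
        obtain ⟨c1, c2, d1, d2, hC1, hC2, hcn, hcw⟩ :=
          split_clo c (Γ.ty x) (Δ.ty x) w1 n1
            (hsum x (Finset.mem_inter.mpr ⟨hxΓ, hxΔ⟩)) hc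
        refine ⟨max c1 a1, max c2 a2, d1 + b1, d2 + b2, ?_, ?_, by omega, by omega⟩
        · have hcons := EJ.cons (Ctx.not_mem_erase_dom Γ x) hC1 hE1
          rw [Ctx.erase_extend hxΓ] at hcons
          simp only [Env.restrict, if_pos hxΓ]
          exact hcons
        · have hcons := EJ.cons (Ctx.not_mem_erase_dom Δ x) hC2 hE2
          rw [Ctx.erase_extend hxΔ] at hcons
          simp only [Env.restrict, if_pos hxΔ]
          exact hcons
      · -- x only in Γ
        have hMeq : M = Γ.ty x := by rw [← hM, Ctx.union_ty_left hxΓ hxΔ]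
        rw [hMeq] at hc
        rw [Ctx.erase_of_not_mem hxΔ] at hE2
        refine ⟨max w1 a1, a2, n1 + b1, b2, ?_, ?_, by omega, by omega⟩
        · have hcons := EJ.cons (Ctx.not_mem_erase_dom Γ x) hc hE1
          rw [Ctx.erase_extend hxΓ] at hcons
          simp only [Env.restrict, if_pos hxΓ]
          exact hcons
        · simp only [Env.restrict, if_neg hxΔ]
          exact hE2
      · -- x only in Δ
        have hMeq : M = Δ.ty x := by rw [← hM, Ctx.union_ty_right hxΓ]
        rw [hMeq] at hc
        rw [Ctx.erase_of_not_mem hxΓ] at hE1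
        refine ⟨a1, max w1 a2, b1, n1 + b2, ?_, ?_, by omega, by omega⟩
        · simp only [Env.restrict, if_neg hxΓ]
          exact hE1
        · have hcons := EJ.cons (Ctx.not_mem_erase_dom Δ x) hc hE2
          rw [Ctx.erase_extend hxΔ] at hcons
          simp only [Env.restrict, if_pos hxΔ]
          exact hcons
      · exact absurd hxdom (by simp [hxΓ, hxΔ])
termination_by 2 * e.size + 1
decreasing_by
  · have hc : e = Env.cons x c e' := by assumption
    subst hc
    have := Clo.size_pos c
    simp [Env.size]
    omega
  · have hc : e = Env.cons x c e' := by assumption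
    subst hc
    simp [Env.size]
end

/-- multiset splitting for environments. -/
theorem multiset_splitting_env {Γ Δ : Ctx} {e : Env} {w n : ℕ}
    (hsum : Γ.Summable Δ) (h : EJ e (Γ.union Δ) w n) :
    ∃ wΓ wΔ nΓ nΔ,
      EJ (e.restrict Γ.dom) Γ wΓ nΓ ∧ EJ (e.restrict Δ.dom) Δ wΔ nΔ ∧
      n = nΓ + nΔ ∧ w = max wΓ wΔ := split_env Γ Δ e w n hsum h
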